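/- Let X and Y be Polish, c : X × Y → [0,∞) continuous, μ ∈ P(X), ν ∈ P(Y) with T_c(μ,ν) < ∞, and let π ∈ C(μ,ν) be an optimal plan. Let X̃ ⊂ X and Ỹ ⊂ Y be Borel and Polish subspaces with μ(X̃) = ν(Ỹ) = 1, let c̃ be the restriction of c to X̃ × Ỹ, and let Γ̃ = supp π ∩ (X̃ × Ỹ). Then every Kantorovich potential f ∈ S_c(μ,ν) admits a Kantorovich potential f̃ ∈ S_c̃(μ,ν) of the restricted problem (with μ, ν viewed as measures on X̃, Ỹ) such that f̃ agrees with f on pr_X(Γ̃) and the conjugates f^c and f̃^c̃ agree on pr_Y(Γ̃). -/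

import Mathlib

open MeasureTheory Filter Set Topology
open scoped ENNReal NNReal Manifold

noncomputable section

/-- The topological support of a Borel measure: points all of whose open
neighborhoods have positive measure. -/
def msupport {X : Type*} [TopologicalSpace X] [MeasurableSpace X]
    (μ : Measure X) : Set X :=
  {x | ∀ U : Set X, IsOpen U → x ∈ U → 0 < μ U}

/-- `π` is a coupling (transport plan) between `μ` and `ν`. -/
def IsCoupling {X Y : Type*} [MeasurableSpace X] [MeasurableSpace Y]
    (π : Measure (X × Y)) (μ : Measure X) (ν : Measure Y) : Prop :=
  π.map Prod.fst = μ ∧ π.map Prod.snd = ν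

/-- The optimal transport cost `T_c(μ, ν)`. -/
def transportCost {X Y : Type*} [MeasurableSpace X] [MeasurableSpace Y]
    (c : X → Y → ℝ) (μ : Measure X) (ν : Measure Y) : ℝ≥0∞ :=
  ⨅ (π : Measure (X × Y)) (_ : IsCoupling π μ ν),
    ∫⁻ p, ENNReal.ofReal (c p.1 p.2) ∂π

/-- `π` is an optimal transport plan between `μ` and `ν` for the cost `c`. -/
def IsOptimalPlan {X Y : Type*} [MeasurableSpace X] [MeasurableSpace Y]
    (c : X → Y → ℝ) (μ : Measure X) (ν : Measure Y) (π : Measure (X × Y)) : Prop :=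
  IsCoupling π μ ν ∧
    ∫⁻ p, ENNReal.ofReal (c p.1 p.2) ∂π = transportCost c μ ν

/-- The `c`-transform of a function `f : X → ℝ ∪ {-∞}`, namely
`f^c(y) = inf_x (c(x,y) - f(x))`. -/
def cTransform {X Y : Type*} (c : X → Y → ℝ) (f : X → EReal) : Y → EReal :=
  fun y => ⨅ x, ((c x y : ℝ) : EReal) - f x

/-- The `c`-transform of a function `g : Y → ℝ ∪ {-∞}`, namely
`g^c(x) = inf_y (c(x,y) - g(y))`. -/
def cTransformY {X Y : Type*} (c : X → Y → ℝ) (g : Y → EReal) : X → EReal :=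
  fun x => ⨅ y, ((c x y : ℝ) : EReal) - g y

/-- `f : X → ℝ ∪ {-∞}` is `c`-concave on `X`: it is the `c`-transform of some
`g : Y → ℝ ∪ {-∞}` and is not identically `-∞`. -/
def CConcave {X Y : Type*} (c : X → Y → ℝ) (f : X → EReal) : Prop :=
  (∃ g : Y → EReal, (∀ y, g y ≠ ⊤) ∧ f = cTransformY c g) ∧
    (∀ x, f x ≠ ⊤) ∧ (∃ x, f x ≠ ⊥)

/-- The `c`-subdifferential `∂_c f = {(x,y) | f(x) + f^c(y) = c(x,y)}`. -/
def cSubdiff {X Y : Type*} (c : X → Y → ℝ) (f : X → EReal) : Set (X × Y) :=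
  {p | f p.1 + cTransform c f p.2 = ((c p.1 p.2 : ℝ) : EReal)}

/-- `f` is a (generalized) Kantorovich potential for `(c, μ, ν)`: it is
`c`-concave and satisfies `f ⊕ f^c = c` almost surely with respect to every
optimal transport plan (which, for `T_c(μ,ν) < ∞`, is equivalent to
`∫ (f ⊕ f^c) dπ = T_c(μ,ν)` for every optimal `π`, since `f ⊕ f^c ≤ c`). -/
def IsKantorovichPotential {X Y : Type*} [MeasurableSpace X] [MeasurableSpace Y]
    (c : X → Y → ℝ) (μ : Measure X) (ν : Measure Y) (f : X → EReal) : Prop :=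
  CConcave c f ∧
    ∀ π : Measure (X × Y), IsOptimalPlan c μ ν π →
      ∀ᵐ p ∂π, f p.1 + cTransform c f p.2 = ((c p.1 p.2 : ℝ) : EReal)

/-- The plan `π` induces regularity on `U` with respect to the compact set `K`. -/
def InducesRegularityOn {X Y : Type*} [TopologicalSpace X] [TopologicalSpace Y]
    [MeasurableSpace X] [MeasurableSpace Y]
    (π : Measure (X × Y)) (U : Set X) (K : Set Y) : Prop :=
  IsCompact K ∧
    (Prod.fst '' msupport π) ∩ U = Prod.fst '' (msupport π ∩ (U ×ˢ K))

/-- The plan `π` induces regularity at the point `x ∈ supp μ`: it induces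
regularity on some relatively open neighborhood `U ⊆ supp μ` of `x`. -/
def InducesRegularityAt {X Y : Type*} [TopologicalSpace X] [TopologicalSpace Y]
    [MeasurableSpace X] [MeasurableSpace Y]
    (π : Measure (X × Y)) (μ : Measure X) (x : X) : Prop :=
  ∃ U : Set X, x ∈ U ∧ (∃ V : Set X, IsOpen V ∧ U = V ∩ msupport μ) ∧
    ∃ K : Set Y, InducesRegularityOn π U K

/-- `F` is a decomposition of the set `S` into its connected components. -/
def IsComponentDecomp {X : Type*} [TopologicalSpace X] {ι : Type*}
    (S : Set X) (F : ι → Set X) : Prop :=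
  (⋃ i, F i) = S ∧ Pairwise (fun i j => Disjoint (F i) (F j)) ∧
    ∀ i, ∃ x ∈ S, F i = connectedComponentIn S x

/-- A transport plan `π` is degenerate (with respect to decompositions `F`, `G`
of the supports of `μ` and `ν` into connected components). -/
def IsDegenerate {X Y : Type*} [MeasurableSpace X] [MeasurableSpace Y] {ι κ : Type*}
    (F : ι → Set X) (G : κ → Set Y) (μ : Measure X) (ν : Measure Y)
    (π : Measure (X × Y)) : Prop :=
  ∃ (I' : Set ι) (J' : Set κ),
    0 < (∑' i : I', μ (F i.1)) ∧
    (∑' i : I', μ (F i.1)) = (∑' i : I', ∑' j : J', π (F i.1 ×ˢ G j.1)) ∧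
    (∑' i : I', ∑' j : J', π (F i.1 ×ˢ G j.1)) = (∑' j : J', ν (G j.1)) ∧
    (∑' j : J', ν (G j.1)) < 1

end

/-! Write `g = f^c` and `f̃ = (g|Ỹ)^c̃`. Then `f ≤ f̃` on `X̃`, `g ≤ f̃^c̃` on `Ỹ` and
`f̃ ⊕ f̃^c̃ ≤ c̃`, so wherever `f ⊕ g = c` the pair `(f̃, f̃^c̃)` agrees with `(f, g)` and attains `c̃`.
As `f` and `g` are upper semicontinuous, the set where `f ⊕ g < c` is open and `π`-null, so
`f ⊕ g = c` on all of `supp π`. Finally, since `X̃ × Ỹ` has full mass, pulling back and pushing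
forward along the inclusion identify the couplings of the two problems with the same costs; hence
an optimal plan of the restricted problem pushes forward to an optimal plan of the original one,
on which `f ⊕ g = c` almost everywhere. -/

theorem EReal.eq_and_eq_of_add_eq_of_le {a b a' b' : EReal} {r : ℝ} (ha : a ≤ a') (hb : b ≤ b')
    (h' : a' + b' ≤ r) (h : a + b = r) : a' = a ∧ b' = b := by
  induction a <;> induction b <;> induction a' <;> induction b' <;> simp_all
  all_goals norm_cast at *
  all_goals constructor <;> linarith

theorem EReal.continuous_coe_sub (e : EReal) : Continuous fun r : ℝ => (r : EReal) - e := by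
  induction e with
  | bot => simp only [EReal.coe_sub_bot]; exact continuous_const
  | coe s =>
    simp only [← EReal.coe_sub]
    exact continuous_coe_real_ereal.comp (continuous_sub_right s)
  | top => simp only [EReal.sub_top]; exact continuous_const

theorem UpperSemicontinuous.isOpen_setOf_lt {α β : Type*} [TopologicalSpace α] [LinearOrder β]
    [DenselyOrdered β] [TopologicalSpace β] [OrderTopology β] {f g : α → β}
    (hf : UpperSemicontinuous f) (hg : LowerSemicontinuous g) : IsOpen {x | f x < g x} := by
  have : {x | f x < g x} = ⋃ t, f ⁻¹' Iio t ∩ g ⁻¹' Ioi t := by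
    ext x
    simp only [mem_ofPred_eq, mem_iUnion, mem_inter_iff, mem_preimage, mem_Iio, mem_Ioi]
    exact ⟨exists_between, fun ⟨t, h₁, h₂⟩ => h₁.trans h₂⟩
  rw [this]
  exact isOpen_iUnion fun t => (hf.isOpen_preimage t).inter (hg.isOpen_preimage t)

section CTransform

variable {X Y : Type*} (c : X → Y → ℝ)

theorem cTransform_le_sub (f : X → EReal) (x : X) (y : Y) :
    cTransform c f y ≤ c x y - f x :=
  iInf_le _ x

theorem add_cTransform_le (f : X → EReal) (x : X) (y : Y) :
    f x + cTransform c f y ≤ c x y := by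
  rw [add_comm, ← EReal.le_sub_iff_add_le (.inr (EReal.coe_ne_bot _)) (.inr (EReal.coe_ne_top _))]
  exact cTransform_le_sub c f x y

theorem le_sub_cTransform (f : X → EReal) (x : X) (y : Y) :
    f x ≤ c x y - cTransform c f y :=
  (EReal.le_sub_iff_add_le (.inr (EReal.coe_ne_bot _)) (.inr (EReal.coe_ne_top _))).2
    (add_cTransform_le c f x y)

theorem cTransform_ne_top {f : X → EReal} {x : X} (hx : f x ≠ ⊥) (y : Y) :
    cTransform c f y ≠ ⊤ :=
  ne_top_of_le_ne_top (by revert hx; induction f x <;> simp [← EReal.coe_sub])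
    (cTransform_le_sub c f x y)

theorem upperSemicontinuous_cTransform [TopologicalSpace Y] (hc : ∀ x, Continuous (c x))
    (f : X → EReal) : UpperSemicontinuous (cTransform c f) :=
  upperSemicontinuous_iInf fun x =>
    ((EReal.continuous_coe_sub (f x)).comp (hc x)).upperSemicontinuous

theorem CConcave.upperSemicontinuous [TopologicalSpace X] (hc : ∀ y, Continuous fun x => c x y)
    {f : X → EReal} (hf : CConcave c f) : UpperSemicontinuous f := by
  obtain ⟨⟨g, -, rfl⟩, -⟩ := hf
  exact upperSemicontinuous_cTransform _ hc g

end CTransform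

section Support

variable {X Y : Type*} [TopologicalSpace X] [TopologicalSpace Y]

theorem isOpen_setOf_add_lt {F : X → EReal} {G : Y → EReal} {c : X → Y → ℝ}
    (hF : UpperSemicontinuous F) (hG : UpperSemicontinuous G) (hFtop : ∀ x, F x ≠ ⊤)
    (hGtop : ∀ y, G y ≠ ⊤) (hc : Continuous fun p : X × Y => c p.1 p.2) :
    IsOpen {p : X × Y | F p.1 + G p.2 < c p.1 p.2} :=
  UpperSemicontinuous.isOpen_setOf_lt
    ((hF.comp continuous_fst).add' (hG.comp continuous_snd) fun p =>
      EReal.continuousAt_add (.inl (hFtop p.1)) (.inr (hGtop p.2)))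
    (continuous_coe_real_ereal.comp hc).lowerSemicontinuous

variable [MeasurableSpace X] [MeasurableSpace Y] {c : X → Y → ℝ} {μ : Measure X} {ν : Measure Y}
  {f : X → EReal}

theorem IsKantorovichPotential.add_cTransform_eq_of_mem_msupport
    (hc : Continuous fun p : X × Y => c p.1 p.2) (hf : IsKantorovichPotential c μ ν f)
    {π : Measure (X × Y)} (hπ : IsOptimalPlan c μ ν π) {p : X × Y} (hp : p ∈ msupport π) :
    f p.1 + cTransform c f p.2 = c p.1 p.2 := by
  obtain ⟨-, hftop, x₀, hx₀⟩ := hf.1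
  refine (add_cTransform_le c f p.1 p.2).eq_of_not_lt fun hlt => ?_
  have hopen : IsOpen {q : X × Y | f q.1 + cTransform c f q.2 < c q.1 q.2} :=
    isOpen_setOf_add_lt (hf.1.upperSemicontinuous c fun y => by fun_prop)
      (upperSemicontinuous_cTransform c (fun x => by fun_prop) f) hftop
      (cTransform_ne_top c hx₀) hc
  have hnull : π {q : X × Y | f q.1 + cTransform c f q.2 < c q.1 q.2} = 0 :=
    measure_mono_null (fun q hq => hq.ne) (ae_iff.1 (hf.2 π hπ))
  exact (hp _ hopen hlt).ne' hnull

end Support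

section Restriction

variable {X X' Y Y' : Type*} [MeasurableSpace X] [MeasurableSpace X'] [MeasurableSpace Y]
  [MeasurableSpace Y'] {μ : Measure X} {ν : Measure Y} {e₁ : X' → X} {e₂ : Y' → Y}

theorem IsCoupling.ae_fst {π : Measure (X × Y)} (hπ : IsCoupling π μ ν) {P : X → Prop}
    (h : ∀ᵐ x ∂μ, P x) : ∀ᵐ p ∂π, P p.1 :=
  ae_of_ae_map measurable_fst.aemeasurable (hπ.1 ▸ h)

theorem IsCoupling.ae_snd {π : Measure (X × Y)} (hπ : IsCoupling π μ ν) {P : Y → Prop}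
    (h : ∀ᵐ y ∂ν, P y) : ∀ᵐ p ∂π, P p.2 :=
  ae_of_ae_map measurable_snd.aemeasurable (hπ.2 ▸ h)

theorem MeasurableEmbedding.map_comap_of_ae_mem_range {e : X' → X} (he : MeasurableEmbedding e)
    (h : ∀ᵐ x ∂μ, x ∈ range e) : (μ.comap e).map e = μ := by
  rw [he.map_comap, Measure.restrict_eq_self_of_ae_mem h]

theorem MeasureTheory.Measure.map_fst_map_prodMap (he₁ : Measurable e₁) (he₂ : Measurable e₂)
    (m : Measure (X' × Y')) : (m.map (Prod.map e₁ e₂)).map Prod.fst = (m.map Prod.fst).map e₁ := by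
  rw [Measure.map_map measurable_fst (he₁.prodMap he₂), Measure.map_map he₁ measurable_fst]
  rfl

theorem MeasureTheory.Measure.map_snd_map_prodMap (he₁ : Measurable e₁) (he₂ : Measurable e₂)
    (m : Measure (X' × Y')) : (m.map (Prod.map e₁ e₂)).map Prod.snd = (m.map Prod.snd).map e₂ := by
  rw [Measure.map_map measurable_snd (he₁.prodMap he₂), Measure.map_map he₂ measurable_snd]
  rfl

variable (he₁ : MeasurableEmbedding e₁) (he₂ : MeasurableEmbedding e₂)
  (hμ : ∀ᵐ x ∂μ, x ∈ range e₁) (hν : ∀ᵐ y ∂ν, y ∈ range e₂)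
include he₁ he₂ hμ hν

theorem IsCoupling.map_prodMap {π' : Measure (X' × Y')}
    (hπ' : IsCoupling π' (μ.comap e₁) (ν.comap e₂)) :
    IsCoupling (π'.map (Prod.map e₁ e₂)) μ ν :=
  ⟨by rw [Measure.map_fst_map_prodMap he₁.measurable he₂.measurable, hπ'.1,
      he₁.map_comap_of_ae_mem_range hμ],
    by rw [Measure.map_snd_map_prodMap he₁.measurable he₂.measurable, hπ'.2,
      he₂.map_comap_of_ae_mem_range hν]⟩

theorem IsCoupling.map_comap_prodMap {π : Measure (X × Y)} (hπ : IsCoupling π μ ν) :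
    (π.comap (Prod.map e₁ e₂)).map (Prod.map e₁ e₂) = π :=
  (he₁.prodMap he₂).map_comap_of_ae_mem_range <| by
    filter_upwards [hπ.ae_fst hμ, hπ.ae_snd hν] with p h₁ h₂
    rw [range_prodMap]
    exact ⟨h₁, h₂⟩

theorem IsCoupling.comap_prodMap {π : Measure (X × Y)} (hπ : IsCoupling π μ ν) :
    IsCoupling (π.comap (Prod.map e₁ e₂)) (μ.comap e₁) (ν.comap e₂) := by
  have hmap := hπ.map_comap_prodMap he₁ he₂ hμ hν
  constructor
  · conv_rhs => rw [← hπ.1, ← hmap, Measure.map_fst_map_prodMap he₁.measurable he₂.measurable,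
      he₁.comap_map]
  · conv_rhs => rw [← hπ.2, ← hmap, Measure.map_snd_map_prodMap he₁.measurable he₂.measurable,
      he₂.comap_map]

theorem transportCost_comap (c : X → Y → ℝ) :
    transportCost (fun x y => c (e₁ x) (e₂ y)) (μ.comap e₁) (ν.comap e₂) =
      transportCost c μ ν := by
  have hE := he₁.prodMap he₂
  unfold transportCost
  apply le_antisymm
  · refine le_iInf₂ fun π hπ => ?_
    refine iInf₂_le_of_le _ (hπ.comap_prodMap he₁ he₂ hμ hν) (le_of_eq ?_)
    exact (hE.lintegral_map fun p => ENNReal.ofReal (c p.1 p.2)).symm.trans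
      (by rw [hπ.map_comap_prodMap he₁ he₂ hμ hν])
  · refine le_iInf₂ fun π' hπ' => ?_
    exact iInf₂_le_of_le _ (hπ'.map_prodMap he₁ he₂ hμ hν) (hE.lintegral_map _).le

theorem IsOptimalPlan.map_prodMap {c : X → Y → ℝ} {π' : Measure (X' × Y')}
    (hπ' : IsOptimalPlan (fun x y => c (e₁ x) (e₂ y)) (μ.comap e₁) (ν.comap e₂) π') :
    IsOptimalPlan c μ ν (π'.map (Prod.map e₁ e₂)) := by
  refine ⟨hπ'.1.map_prodMap he₁ he₂ hμ hν, ?_⟩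
  rw [(he₁.prodMap he₂).lintegral_map, ← transportCost_comap he₁ he₂ hμ hν c]
  exact hπ'.2

end Restriction

section RestrictPotential

variable {X X' Y Y' : Type*} (c : X → Y → ℝ) (e₁ : X' → X) (e₂ : Y' → Y)

noncomputable def restrictPotential (f : X → EReal) : X' → EReal :=
  cTransformY (fun x y => c (e₁ x) (e₂ y)) (cTransform c f ∘ e₂)

theorem restrictPotential_eq_and_cTransform_eq {f : X → EReal} {x : X'} {y : Y'}
    (h : f (e₁ x) + cTransform c f (e₂ y) = c (e₁ x) (e₂ y)) :
    restrictPotential c e₁ e₂ f x = f (e₁ x) ∧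
      cTransform (fun x y => c (e₁ x) (e₂ y)) (restrictPotential c e₁ e₂ f) y =
        cTransform c f (e₂ y) :=
  EReal.eq_and_eq_of_add_eq_of_le
    (le_iInf fun y' => le_sub_cTransform c f (e₁ x) (e₂ y'))
    (le_iInf fun x' => le_sub_cTransform (fun y x => c (e₁ x) (e₂ y)) (cTransform c f ∘ e₂) y x')
    (add_cTransform_le _ _ x y) h

variable [MeasurableSpace X] [MeasurableSpace X'] [MeasurableSpace Y] [MeasurableSpace Y']
  {μ : Measure X} {ν : Measure Y} {e₁ e₂}

theorem IsKantorovichPotential.restrict [NeZero μ] {f : X → EReal}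
    (hf : IsKantorovichPotential c μ ν f) {π : Measure (X × Y)} (hπ : IsOptimalPlan c μ ν π)
    (he₁ : MeasurableEmbedding e₁) (he₂ : MeasurableEmbedding e₂)
    (hμ : ∀ᵐ x ∂μ, x ∈ range e₁) (hν : ∀ᵐ y ∂ν, y ∈ range e₂) :
    IsKantorovichPotential (fun x y => c (e₁ x) (e₂ y)) (μ.comap e₁) (ν.comap e₂)
      (restrictPotential c e₁ e₂ f) := by
  obtain ⟨-, -, x₀, hx₀⟩ := hf.1
  have : NeZero π := ⟨fun h => NeZero.ne μ (by rw [← hπ.1.1, h, Measure.map_zero])⟩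
  obtain ⟨p, hp, ⟨x, hx⟩, ⟨y, hy⟩⟩ :=
    ((hf.2 π hπ).and ((hπ.1.ae_fst hμ).and (hπ.1.ae_snd hν))).exists
  rw [← hx, ← hy] at hp
  have hfx : f (e₁ x) ≠ ⊥ := fun h => by simp [h] at hp
  have hgy : cTransform c f (e₂ y) ≠ ⊥ := fun h => by simp [h] at hp
  refine ⟨⟨⟨_, fun y => cTransform_ne_top c hx₀ (e₂ y), rfl⟩,
    fun x' => cTransform_ne_top (fun y x => c (e₁ x) (e₂ y)) hgy x', x, ?_⟩, fun π' hπ' => ?_⟩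
  · rwa [(restrictPotential_eq_and_cTransform_eq c e₁ e₂ hp).1]
  filter_upwards [(he₁.prodMap he₂).ae_map_iff.1 (hf.2 _ (hπ'.map_prodMap he₁ he₂ hμ hν))]
    with q hq
  obtain ⟨hfq, hgq⟩ := restrictPotential_eq_and_cTransform_eq c e₁ e₂ hq
  rw [hfq, hgq]
  exact hq

end RestrictPotential

theorem stmt2_general {X Y : Type*}
    [TopologicalSpace X] [MeasurableSpace X]
    [TopologicalSpace Y] [MeasurableSpace Y]
    (c : X → Y → ℝ)
    (hccont : Continuous fun p : X × Y => c p.1 p.2)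
    (μ : Measure X) (ν : Measure Y) [IsProbabilityMeasure μ] [IsProbabilityMeasure ν]
    (π : Measure (X × Y)) (hπ : IsOptimalPlan c μ ν π)
    (Xt : Set X) (Yt : Set Y) (hXtm : MeasurableSet Xt) (hYtm : MeasurableSet Yt)
    (hXt1 : μ Xt = 1) (hYt1 : ν Yt = 1)
    (f : X → EReal) (hf : IsKantorovichPotential c μ ν f) :
    ∃ ft : ↥Xt → EReal,
      IsKantorovichPotential (fun (x : ↥Xt) (y : ↥Yt) => c x.1 y.1)
        (Measure.comap Subtype.val μ) (Measure.comap Subtype.val ν) ft ∧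
      (∀ p : X × Y, p ∈ msupport π ∩ (Xt ×ˢ Yt) →
        ∀ hx : p.1 ∈ Xt, ft ⟨p.1, hx⟩ = f p.1) ∧
      (∀ p : X × Y, p ∈ msupport π ∩ (Xt ×ˢ Yt) →
        ∀ hy : p.2 ∈ Yt,
          cTransform (fun (x : ↥Xt) (y : ↥Yt) => c x.1 y.1) ft ⟨p.2, hy⟩ =
            cTransform c f p.2) := by
  have hμ : ∀ᵐ x ∂μ, x ∈ range (Subtype.val : Xt → X) := by
    rw [Subtype.range_coe, ae_mem_iff_measure_eq hXtm.nullMeasurableSet, hXt1, measure_univ]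
  have hν : ∀ᵐ y ∂ν, y ∈ range (Subtype.val : Yt → Y) := by
    rw [Subtype.range_coe, ae_mem_iff_measure_eq hYtm.nullMeasurableSet, hYt1, measure_univ]
  have hsupp {p : X × Y} (hp : p ∈ msupport π ∩ Xt ×ˢ Yt) :=
    restrictPotential_eq_and_cTransform_eq c Subtype.val Subtype.val (x := ⟨p.1, hp.2.1⟩)
      (y := ⟨p.2, hp.2.2⟩) (hf.add_cTransform_eq_of_mem_msupport hccont hπ hp.1)
  exact ⟨restrictPotential c Subtype.val Subtype.val f,
    hf.restrict c hπ (.subtype_coe hXtm) (.subtype_coe hYtm) hμ hν,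
    fun p hp _ => (hsupp hp).1, fun p hp _ => (hsupp hp).2⟩

/-- Restriction of Kantorovich potentials to Borel Polish
subspaces of full mass. -/
theorem stmt2 {X Y : Type*}
    [TopologicalSpace X] [PolishSpace X] [MeasurableSpace X] [BorelSpace X]
    [TopologicalSpace Y] [PolishSpace Y] [MeasurableSpace Y] [BorelSpace Y]
    (c : X → Y → ℝ) (hc0 : ∀ x y, 0 ≤ c x y)
    (hccont : Continuous fun p : X × Y => c p.1 p.2)
    (μ : Measure X) (ν : Measure Y) [IsProbabilityMeasure μ] [IsProbabilityMeasure ν]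
    (hT : transportCost c μ ν < ⊤)
    (π : Measure (X × Y)) (hπ : IsOptimalPlan c μ ν π)
    (Xt : Set X) (Yt : Set Y) (hXtm : MeasurableSet Xt) (hYtm : MeasurableSet Yt)
    (hXtP : PolishSpace ↥Xt) (hYtP : PolishSpace ↥Yt)
    (hXt1 : μ Xt = 1) (hYt1 : ν Yt = 1)
    (f : X → EReal) (hf : IsKantorovichPotential c μ ν f) :
    ∃ ft : ↥Xt → EReal,
      IsKantorovichPotential (fun (x : ↥Xt) (y : ↥Yt) => c x.1 y.1)
        (Measure.comap Subtype.val μ) (Measure.comap Subtype.val ν) ft ∧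
      (∀ p : X × Y, p ∈ msupport π ∩ (Xt ×ˢ Yt) →
        ∀ hx : p.1 ∈ Xt, ft ⟨p.1, hx⟩ = f p.1) ∧
      (∀ p : X × Y, p ∈ msupport π ∩ (Xt ×ˢ Yt) →
        ∀ hy : p.2 ∈ Yt,
          cTransform (fun (x : ↥Xt) (y : ↥Yt) => c x.1 y.1) ft ⟨p.2, hy⟩ =
            cTransform c f p.2) :=
  stmt2_general c hccont μ ν π hπ Xt Yt hXtm hYtm hXt1 hYt1 f hf
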